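/- arXiv:1606.02642 — 3 statements merged into one kernel-verified Lean document; each statement's English description precedes it below -/
import Mathlib

section
/- For fixed x with |x| < R (R the radius of convergence of f at 0), the function α ↦ Σ_{n≥0} c_n x^n/(n+α) is analytic on ℂ \ {0,-1,-2,...} and agrees with α ↦ x^{-α} ∫_0^x t^{α-1} f(t) dt for Re α > 0; i.e., the Hadamard finite part Σ_{n≥0} c_n x^n/(n+α) is the analytic continuation in α of the integral. -/
open Complex MeasureTheory Set Metric intervalIntegral
open scoped Topology Interval

/-!
Expanding `f` termwise, `∫₀¹ t^(α-1) tⁿ dt = 1/(n+α)` for `Re α > 0`, and the interchange of sum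
and integral is dominated by `t^(Re α - 1) ∑ ‖cₙ xⁿ‖`, which is integrable on `[0,1]`. The series
`∑ cₙ xⁿ/(n+α)` itself is analytic away from the poles: near a given `α₀` it is a finite sum of
simple fractions plus a tail whose denominators satisfy `‖n+α‖ ≥ 1`, so the tail converges
uniformly and its sum is holomorphic.
-/

lemma ofReal_mul_cpow_of_pos {t : ℝ} (ht : 0 < t) {x : ℂ} (hx : x ≠ 0) (w : ℂ) :
    ((t : ℂ) * x) ^ w = (t : ℂ) ^ w * x ^ w := by
  have htc : (t : ℂ) ≠ 0 := ofReal_ne_zero.2 ht.ne'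
  rw [cpow_def_of_ne_zero (mul_ne_zero htc hx), log_ofReal_mul ht hx, ofReal_log ht.le, add_mul,
    exp_add, ← cpow_def_of_ne_zero htc, ← cpow_def_of_ne_zero hx]

lemma summable_norm_mul_pow_of_norm_lt {𝕜 : Type*} [NormedField 𝕜] {c : ℕ → 𝕜} {x y : 𝕜}
    (hy : Summable fun n => c n * y ^ n) (hxy : ‖x‖ < ‖y‖) :
    Summable fun n => ‖c n * x ^ n‖ := by
  have hy0 : 0 < ‖y‖ := (norm_nonneg x).trans_lt hxy
  obtain ⟨C, hC⟩ := hy.tendsto_atTop_zero.norm.bddAbove_range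
  have hgeom : Summable fun n => C * (‖x‖ / ‖y‖) ^ n :=
    (summable_geometric_of_lt_one (by positivity) ((div_lt_one hy0).2 hxy)).mul_left C
  refine hgeom.of_nonneg_of_le (fun n => norm_nonneg _) fun n => ?_
  calc ‖c n * x ^ n‖ = ‖c n * y ^ n‖ * (‖x‖ / ‖y‖) ^ n := by
        rw [norm_mul, norm_mul, norm_pow, norm_pow, div_pow, mul_assoc,
          mul_div_cancel₀ _ (by positivity)]
    _ ≤ C * (‖x‖ / ‖y‖) ^ n := by gcongr; exact hC (mem_range_self n)

lemma one_le_norm_natCast_add {n : ℕ} {α : ℂ} (h : ‖α‖ + 1 ≤ n) : 1 ≤ ‖(n : ℂ) + α‖ := by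
  have := norm_sub_norm_le (n : ℂ) (-α)
  rw [norm_neg, sub_neg_eq_add, Complex.norm_natCast] at this
  linarith

lemma norm_div_natCast_add_le (a : ℂ) {n : ℕ} {α : ℂ} (h : ‖α‖ + 1 ≤ n) :
    ‖a / (n + α)‖ ≤ ‖a‖ := by
  rw [norm_div]
  exact div_le_self (norm_nonneg a) (one_le_norm_natCast_add h)

lemma norm_add_one_le_of_mem_ball {N : ℕ} {α : ℂ} (hα : α ∈ ball (0 : ℂ) (N - 1)) (n : ℕ) :
    ‖α‖ + 1 ≤ ((n + N : ℕ) : ℝ) := by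
  rw [mem_ball_zero_iff] at hα
  push_cast
  linarith [(n.cast_nonneg : (0 : ℝ) ≤ n)]

lemma differentiableOn_tsum_div_natCast_add_nat_add {a : ℕ → ℂ}
    (ha : Summable fun n => ‖a n‖) (N : ℕ) :
    DifferentiableOn ℂ (fun α => ∑' n, a (n + N) / ((n + N : ℕ) + α)) (ball 0 (N - 1)) := by
  refine differentiableOn_tsum_of_summable_norm ((summable_nat_add_iff N).2 ha) (fun n => ?_)
    isOpen_ball fun n α hα => norm_div_natCast_add_le _ (norm_add_one_le_of_mem_ball hα n)
  intro α hα
  have hne : ((n + N : ℕ) : ℂ) + α ≠ 0 := norm_pos_iff.1 <|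
    one_pos.trans_le (one_le_norm_natCast_add (norm_add_one_le_of_mem_ball hα n))
  exact ((differentiableAt_const _).div ((differentiableAt_const _).add differentiableAt_id)
    hne).differentiableWithinAt

theorem analyticAt_tsum_div_natCast_add {a : ℕ → ℂ} (ha : Summable fun n => ‖a n‖) {α₀ : ℂ}
    (hα₀ : ∀ m : ℕ, α₀ ≠ -m) : AnalyticAt ℂ (fun α => ∑' n, a n / (n + α)) α₀ := by
  obtain ⟨N, hN⟩ := exists_nat_gt (‖α₀‖ + 1)
  have hball : ball (0 : ℂ) (N - 1) ∈ 𝓝 α₀ :=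
    isOpen_ball.mem_nhds (by rw [mem_ball_zero_iff]; linarith)
  have hsplit : (fun α => ∑ n ∈ Finset.range N, a n / (n + α)
      + ∑' n, a (n + N) / ((n + N : ℕ) + α)) =ᶠ[𝓝 α₀] fun α => ∑' n, a n / (n + α) := by
    filter_upwards [hball] with α hα
    have htail : Summable fun n => a (n + N) / ((n + N : ℕ) + α) :=
      ((summable_nat_add_iff N).2 ha).of_norm_bounded
        fun n => norm_div_natCast_add_le _ (norm_add_one_le_of_mem_ball hα n)
    exact ((summable_nat_add_iff N).1 htail).sum_add_tsum_nat_add N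
  refine AnalyticAt.congr ?_ hsplit
  refine (Finset.analyticAt_fun_sum _ fun m _ => ?_).add
    ((differentiableOn_tsum_div_natCast_add_nat_add ha N).analyticAt hball)
  exact analyticAt_const.div (analyticAt_const.add analyticAt_id)
    fun h => hα₀ m (eq_neg_of_add_eq_zero_right h)

lemma integral_cpow_sub_one_mul_pow (n : ℕ) {α : ℂ} (hα : 0 < α.re) :
    ∫ t in (0 : ℝ)..1, (t : ℂ) ^ (α - 1) * (t : ℂ) ^ n = 1 / (n + α) := by
  have hre : -1 < (α + n - 1).re := by
    simp only [sub_re, add_re, natCast_re, one_re]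
    linarith [(n.cast_nonneg : (0 : ℝ) ≤ n)]
  have hne : α + n ≠ 0 := fun h => by simp [h] at hre
  calc ∫ t in (0 : ℝ)..1, (t : ℂ) ^ (α - 1) * (t : ℂ) ^ n
      = ∫ t in (0 : ℝ)..1, (t : ℂ) ^ (α + n - 1) := by
        refine integral_congr_ae (ae_of_all _ fun t ht => ?_)
        rw [uIoc_of_le zero_le_one] at ht
        rw [← cpow_natCast, ← cpow_add _ _ (ofReal_ne_zero.2 ht.1.ne')]
        ring_nf
    _ = 1 / (n + α) := by
        rw [integral_cpow (Or.inl hre), sub_add_cancel, ofReal_one, one_cpow, ofReal_zero,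
          zero_cpow hne, sub_zero, add_comm]

theorem integral_cpow_sub_one_mul_tsum {a : ℕ → ℂ} (ha : Summable fun n => ‖a n‖) {α : ℂ}
    (hα : 0 < α.re) :
    ∫ t in (0 : ℝ)..1, (t : ℂ) ^ (α - 1) * ∑' n, a n * (t : ℂ) ^ n = ∑' n, a n / (n + α) := by
  have hterm : ∀ n,
      ∫ t in (0 : ℝ)..1, (t : ℂ) ^ (α - 1) * (a n * (t : ℂ) ^ n) = a n / (n + α) := by
    intro n
    simp_rw [mul_left_comm _ (a n)]
    rw [intervalIntegral.integral_const_mul, integral_cpow_sub_one_mul_pow n hα, mul_one_div]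
  refine (HasSum.tsum_eq ?_).symm
  simp_rw [← hterm]
  have hpow : ∀ t ∈ Ι (0 : ℝ) 1, ∀ n : ℕ, ‖(t : ℂ) ^ n‖ ≤ 1 := fun t ht n => by
    rw [uIoc_of_le zero_le_one] at ht
    rw [norm_pow, norm_real, Real.norm_of_nonneg ht.1.le]
    exact pow_le_one₀ ht.1.le ht.2
  refine hasSum_integral_of_dominated_convergence (fun n t => ‖a n‖ * t ^ (α.re - 1))
    (fun n => ?_) (fun n => ae_of_all _ fun t ht => ?_) (ae_of_all _ fun t _ => ha.mul_right _)
    ?_ (ae_of_all _ fun t ht => ?_)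
  · exact (by fun_prop : Measurable fun t : ℝ => (t : ℂ) ^ (α - 1) * (a n * (t : ℂ) ^ n))
      |>.aestronglyMeasurable
  · have ht0 : 0 < t := by rw [uIoc_of_le zero_le_one] at ht; exact ht.1
    rw [norm_mul, norm_mul, norm_cpow_eq_rpow_re_of_pos ht0, sub_re, one_re, mul_comm]
    exact mul_le_mul_of_nonneg_right (mul_le_of_le_one_right (norm_nonneg _) (hpow t ht n))
      (by positivity)
  · simp_rw [tsum_mul_right]
    exact (intervalIntegrable_rpow' (by linarith)).const_mul _
  · have hs : Summable fun n => a n * (t : ℂ) ^ n := ha.of_norm_bounded fun n => by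
      rw [norm_mul]; exact mul_le_of_le_one_right (norm_nonneg _) (hpow t ht n)
    exact hs.hasSum.mul_left _

theorem hadamard_analytic_continuation_general (c : ℕ → ℂ) (R : ℝ)
    (hconv : ∀ y : ℂ, ‖y‖ < R → Summable (fun n => c n * y ^ n))
    (x : ℂ) (hx : ‖x‖ < R) (hx0 : x ≠ 0) :
    AnalyticOnNhd ℂ (fun α : ℂ => ∑' n : ℕ, c n * x ^ n / ((n : ℂ) + α))
      {α : ℂ | ∀ m : ℕ, α ≠ -(m : ℂ)} ∧
    ∀ α : ℂ, 0 < α.re →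
      (∑' n : ℕ, c n * x ^ n / ((n : ℂ) + α))
        = x ^ (-α) * ∫ t in (0:ℝ)..1,
            x * ((t : ℂ) * x) ^ (α - 1) * (∑' n : ℕ, c n * ((t : ℂ) * x) ^ n) := by
  obtain ⟨r, hxr, hrR⟩ := exists_between hx
  have hr : ‖(r : ℂ)‖ = r := by rw [norm_real, Real.norm_of_nonneg ((norm_nonneg x).trans hxr.le)]
  have ha : Summable fun n => ‖c n * x ^ n‖ :=
    summable_norm_mul_pow_of_norm_lt (hconv r (hr.symm ▸ hrR)) (hr.symm ▸ hxr)
  refine ⟨fun α hα => analyticAt_tsum_div_natCast_add ha hα, fun α hα => ?_⟩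
  rw [← integral_cpow_sub_one_mul_tsum ha hα, ← intervalIntegral.integral_const_mul]
  refine integral_congr_ae (ae_of_all _ fun t ht => ?_)
  rw [uIoc_of_le zero_le_one] at ht
  have hxα : x ^ (-α) * (x * x ^ (α - 1)) = 1 := by
    rw [cpow_sub _ _ hx0, cpow_one, mul_div_cancel₀ _ hx0, ← cpow_add _ _ hx0, neg_add_cancel,
      cpow_zero]
  have hseries : (fun n => c n * ((t : ℂ) * x) ^ n) = fun n => c n * x ^ n * (t : ℂ) ^ n := by
    ext n; ring
  rw [hseries, ofReal_mul_cpow_of_pos ht.1 hx0]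
  linear_combination -((t : ℂ) ^ (α - 1) * ∑' n, c n * x ^ n * (t : ℂ) ^ n) * hxα

/-- For fixed `x` with `|x| < R` (`R` the radius of convergence of
`∑ cₙ xⁿ` at `0`), the function `α ↦ ∑ cₙ xⁿ/(n+α)` is analytic on
`ℂ \ {0,-1,-2,...}` and agrees with `α ↦ x^(-α) ∫_0^x t^(α-1) f(t) dt` for `Re α > 0`:
the Hadamard finite part is the analytic continuation in `α` of the integral. -/
theorem hadamard_analytic_continuation (c : ℕ → ℂ) (R : ℝ) (hR : 0 < R)
    (hconv : ∀ y : ℂ, ‖y‖ < R → Summable (fun n => c n * y ^ n))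
    (x : ℂ) (hx : ‖x‖ < R) (hx0 : x ≠ 0) :
    AnalyticOnNhd ℂ (fun α : ℂ => ∑' n : ℕ, c n * x ^ n / ((n : ℂ) + α))
      {α : ℂ | ∀ m : ℕ, α ≠ -(m : ℂ)} ∧
    ∀ α : ℂ, 0 < α.re →
      (∑' n : ℕ, c n * x ^ n / ((n : ℂ) + α))
        = x ^ (-α) * ∫ t in (0:ℝ)..1,
            x * ((t : ℂ) * x) ^ (α - 1) * (∑' n : ℕ, c n * ((t : ℂ) * x) ^ n) :=
  hadamard_analytic_continuation_general c R hconv x hx hx0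
end

section
/- For Re α > -1, Re β > -1, the Jacobi polynomials on [0,1] satisfy ∫_0^1 p_n(x)^2 x^α(1-x)^β dx = n! Γ(n+α+1) Γ(n+β+1) / ((2n+α+β+1) Γ(n+α+β+1)). -/
/-!
On `0 < re z < 1` the `m`-th derivative of `z^a (1-z)^b` is `z^(a-m) (1-z)^(b-m) Q_m(z)` for a
polynomial `Q_m` of degree `≤ m` whose leading coefficient is `(-1)^m (a+b)(a+b-1)⋯(a+b-m+1)`.
With `a = α + n`, `b = β + n` this gives `p_n = Q_n` on `(0,1)`, so the integrand is
`Q_n · Dⁿ(x^a (1-x)^b)`. Integrating by parts `n` times moves every derivative onto `Q_n`; the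
boundary terms vanish because `Dᵏ(x^a (1-x)^b)` vanishes at `0` and `1` for `k < n`. What remains
is `n!` times the leading coefficient of `Q_n` times `B(α+n+1, β+n+1)`, which the functional
equation of `Γ` turns into the stated ratio.
-/

/-- The Jacobi polynomial on `[0,1]` via the Rodrigues formula. -/
noncomputable def jacobiP (α β : ℂ) (n : ℕ) (z : ℂ) : ℂ :=
  (z ^ α * (1 - z) ^ β)⁻¹ *
    iteratedDeriv n (fun w : ℂ => w ^ n * (1 - w) ^ n * (w ^ α * (1 - w) ^ β)) z

open Complex Polynomial Set MeasureTheory intervalIntegral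

theorem Polynomial.iterate_derivative_eq_C_of_natDegree_le {R : Type*} [Semiring R] {p : R[X]}
    {n : ℕ} (hp : p.natDegree ≤ n) : derivative^[n] p = C (n.factorial * p.coeff n) := by
  refine eq_C_of_natDegree_le_zero ((natDegree_iterate_derivative p n).trans (by omega)) |>.trans ?_
  rw [coeff_iterate_derivative, zero_add, Nat.descFactorial_self, nsmul_eq_mul]

-- Differentiating `z^(a-m) (1-z)^(b-m) Q_m(z)` gives `z^(a-m-1) (1-z)^(b-m-1) Q_{m+1}(z)`.
noncomputable def rodriguesPoly (a b : ℂ) : ℕ → ℂ[X]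
  | 0 => 1
  | m + 1 => (C (a - m) * (1 - X) - C (b - m) * X) * rodriguesPoly a b m
      + X * (1 - X) * derivative (rodriguesPoly a b m)

theorem natDegree_rodriguesPoly_le (a b : ℂ) (m : ℕ) : (rodriguesPoly a b m).natDegree ≤ m := by
  induction m with
  | zero => simp [rodriguesPoly]
  | succ m ih =>
    rw [rodriguesPoly]
    refine natDegree_add_le_of_degree_le
      ((natDegree_mul_le_of_le (by compute_degree!) ih).trans_eq (add_comm 1 m)) ?_
    rcases m with _ | m
    · simp [rodriguesPoly]
    · have hX : (X * (1 - X) : ℂ[X]).natDegree ≤ 2 := by compute_degree!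
      have hQ' : (derivative (rodriguesPoly a b (m + 1))).natDegree ≤ m :=
        (natDegree_derivative_le _).trans (by omega)
      exact (natDegree_mul_le_of_le hX hQ').trans (by omega)

theorem coeff_rodriguesPoly_self (a b : ℂ) (m : ℕ) :
    (rodriguesPoly a b m).coeff m = (-1) ^ m * (descPochhammer ℂ m).eval (a + b) := by
  induction m with
  | zero => simp [rodriguesPoly]
  | succ m ih =>
    have hdeg := natDegree_rodriguesPoly_le a b m
    set Q := rodriguesPoly a b m
    have hQ : Q.coeff (m + 1) = 0 := coeff_eq_zero_of_natDegree_lt (by omega)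
    have hXQ' : (X * derivative Q).coeff (m + 1) = 0 := by
      rw [coeff_X_mul, coeff_derivative, hQ, zero_mul]
    have hXQ'' : (X * derivative Q).coeff m = m * Q.coeff m := by
      cases m with
      | zero => simp
      | succ k => rw [coeff_X_mul, coeff_derivative]; push_cast; ring
    have hexpand : rodriguesPoly a b (m + 1) = C (a - m) * Q - C (a - m + (b - m)) * (X * Q)
        + (X * derivative Q - X * (X * derivative Q)) := by
      rw [rodriguesPoly, C_add]; ring
    rw [hexpand]
    simp only [coeff_add, coeff_sub, coeff_C_mul, coeff_X_mul, hQ, hXQ', hXQ'', ih,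
      descPochhammer_succ_eval]
    ring

noncomputable def rodriguesFun (a b : ℂ) (m : ℕ) (z : ℂ) : ℂ :=
  z ^ (a - m) * (1 - z) ^ (b - m) * (rodriguesPoly a b m).eval z

theorem ne_zero_and_one_sub_ne_zero_of_mem_strip {z : ℂ} (hz : z ∈ re ⁻¹' Ioo 0 1) :
    z ≠ 0 ∧ 1 - z ≠ 0 := by
  constructor <;> rintro h
  · simpa [h] using hz.1
  · simpa [← sub_eq_zero.mp h] using hz.2

theorem cpow_eq_cpow_sub_one_mul {x : ℂ} (hx : x ≠ 0) (y : ℂ) : x ^ y = x ^ (y - 1) * x := by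
  conv_lhs => rw [← sub_add_cancel y 1, cpow_add _ _ hx, cpow_one]

theorem hasDerivAt_rodriguesFun (a b : ℂ) (m : ℕ) {z : ℂ} (hz : z ∈ re ⁻¹' Ioo 0 1) :
    HasDerivAt (rodriguesFun a b m) (rodriguesFun a b (m + 1) z) z := by
  obtain ⟨hz0, hz1⟩ := ne_zero_and_one_sub_ne_zero_of_mem_strip hz
  have hpow := (hasStrictDerivAt_cpow_const (c := a - m) (Or.inl hz.1)).hasDerivAt
  have hpow' := ((hasDerivAt_id z).const_sub 1).cpow_const (c := b - m)
    (Or.inl (by simpa using hz.2))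
  refine ((hpow.mul hpow').mul ((rodriguesPoly a b m).hasDerivAt z)).congr_deriv ?_
  have hcast : a - m - 1 = a - (m + 1 : ℕ) ∧ b - m - 1 = b - (m + 1 : ℕ) := by
    push_cast; constructor <;> ring
  simp only [rodriguesFun, rodriguesPoly, eval_add, eval_mul, eval_sub, eval_one, eval_X, eval_C,
    Pi.mul_apply, id, cpow_eq_cpow_sub_one_mul hz0 (a - m),
    cpow_eq_cpow_sub_one_mul hz1 (b - m), hcast.1, hcast.2]
  ring

theorem iteratedDeriv_cpow_mul_one_sub_cpow (a b : ℂ) (m : ℕ) :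
    EqOn (iteratedDeriv m fun z => z ^ a * (1 - z) ^ b) (rodriguesFun a b m) (re ⁻¹' Ioo 0 1) := by
  induction m with
  | zero => intro z _; simp [rodriguesFun, rodriguesPoly]
  | succ m ih =>
    intro z hz
    have hopen : IsOpen (re ⁻¹' Ioo (0 : ℝ) 1) := isOpen_Ioo.preimage continuous_re
    rw [iteratedDeriv_succ,
      (Filter.eventuallyEq_of_mem (hopen.mem_nhds hz) ih).deriv_eq]
    exact (hasDerivAt_rodriguesFun a b m hz).deriv

theorem continuousOn_rodriguesFun {a b : ℂ} {m : ℕ} (ha : 0 < (a - m).re) (hb : 0 < (b - m).re) :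
    ContinuousOn (fun x : ℝ => rodriguesFun a b m x) (Icc 0 1) := by
  refine continuousOn_of_forall_continuousAt fun x hx => ?_
  have hx0 : 0 ≤ (x : ℂ).re := by simpa using hx.1
  have hx1 : 0 ≤ (1 - (x : ℂ)).re := by simpa using hx.2
  have hpow : ContinuousAt (fun z : ℂ => z ^ (a - m)) x :=
    continuousAt_cpow_const_of_re_pos (Or.inl hx0) ha
  have hpow' : ContinuousAt (fun z : ℂ => (1 - z) ^ (b - m)) x :=
    (continuousAt_cpow_const_of_re_pos (Or.inl hx1) hb).comp
      (continuous_const.sub continuous_id).continuousAt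
  have : ContinuousAt (rodriguesFun a b m) x :=
    (hpow.mul hpow').mul (rodriguesPoly a b m).continuous.continuousAt
  exact this.comp continuous_ofReal.continuousAt

theorem rodriguesFun_apply_zero {a : ℂ} {m : ℕ} (ha : a - m ≠ 0) (b : ℂ) :
    rodriguesFun a b m 0 = 0 := by
  simp [rodriguesFun, zero_cpow ha]

theorem rodriguesFun_apply_one (a : ℂ) {b : ℂ} {m : ℕ} (hb : b - m ≠ 0) :
    rodriguesFun a b m 1 = 0 := by
  simp [rodriguesFun, zero_cpow hb]

theorem intervalIntegrable_rodriguesFun {a b : ℂ} {m : ℕ} (ha : -1 < (a - m).re)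
    (hb : -1 < (b - m).re) :
    IntervalIntegrable (fun x : ℝ => rodriguesFun a b m x) volume 0 1 := by
  have hbeta := betaIntegral_convergent (u := a - m + 1) (v := b - m + 1)
    (by rw [add_re, one_re]; linarith) (by rw [add_re, one_re]; linarith)
  simp only [add_sub_cancel_right] at hbeta
  exact hbeta.mul_continuousOn
    ((rodriguesPoly a b m).continuous.comp continuous_ofReal).continuousOn

theorem integral_eval_mul_eq_neg_integral_derivative_mul {a b : ℝ} (hab : a ≤ b) {f f' : ℝ → ℂ}
    (hf : ContinuousOn f (Icc a b)) (hff' : ∀ x ∈ Ioo a b, HasDerivAt f (f' x) x)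
    (ha : f a = 0) (hb : f b = 0) (hf' : IntervalIntegrable f' volume a b) (P : ℂ[X]) :
    ∫ x in a..b, P.eval (x : ℂ) * f' x = -∫ x in a..b, (derivative P).eval (x : ℂ) * f x := by
  have hP : ∀ x : ℝ, HasDerivAt (fun y : ℝ => P.eval (y : ℂ)) ((derivative P).eval (x : ℂ)) x :=
    fun x => (P.hasDerivAt (x : ℂ)).comp_ofReal
  rw [integral_mul_deriv_eq_deriv_mul_of_hasDerivAt
    (fun x _ => (hP x).continuousAt.continuousWithinAt) (by rwa [uIcc_of_le hab])
    (fun x _ => hP x) (by rwa [min_eq_left hab, max_eq_right hab])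
    ((P.derivative.continuous.comp continuous_ofReal).intervalIntegrable a b) hf', ha, hb]
  simp

theorem integral_eval_mul_eq_integral_iterate_derivative_mul {a b : ℝ} (hab : a ≤ b)
    (f : ℕ → ℝ → ℂ) (n : ℕ)
    (hcont : ∀ k < n, ContinuousOn (f k) (Icc a b))
    (hderiv : ∀ k < n, ∀ x ∈ Ioo a b, HasDerivAt (f k) (f (k + 1) x) x)
    (hleft : ∀ k < n, f k a = 0) (hright : ∀ k < n, f k b = 0)
    (hint : ∀ k ≤ n, IntervalIntegrable (f k) volume a b) (P : ℂ[X]) :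
    ∫ x in a..b, P.eval (x : ℂ) * f n x
      = (-1) ^ n * ∫ x in a..b, (derivative^[n] P).eval (x : ℂ) * f 0 x := by
  induction n generalizing P with
  | zero => simp
  | succ n ih =>
    rw [integral_eval_mul_eq_neg_integral_derivative_mul hab (hcont n n.lt_succ_self)
      (hderiv n n.lt_succ_self) (hleft n n.lt_succ_self) (hright n n.lt_succ_self)
      (hint (n + 1) le_rfl),
      ih (fun k hk => hcont k (by omega)) (fun k hk => hderiv k (by omega))
        (fun k hk => hleft k (by omega)) (fun k hk => hright k (by omega))
        (fun k hk => hint k (by omega)), Function.iterate_succ_apply, pow_succ]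
    ring

theorem integral_eval_rodriguesPoly_mul_rodriguesFun {a b : ℂ} {n : ℕ} (ha : (n : ℝ) - 1 < a.re)
    (hb : (n : ℝ) - 1 < b.re) :
    ∫ x in (0 : ℝ)..1, (rodriguesPoly a b n).eval (x : ℂ) * rodriguesFun a b n x
      = n.factorial * (descPochhammer ℂ n).eval (a + b) * betaIntegral (a + 1) (b + 1) := by
  have hre (c : ℂ) (k : ℕ) : (c - k).re = c.re - k := by simp
  have hpos (k : ℕ) (hk : k < n) : 0 < (a - k).re ∧ 0 < (b - k).re := by
    have : (k : ℝ) + 1 ≤ n := by exact_mod_cast hk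
    constructor <;> rw [hre] <;> linarith
  have hgt (k : ℕ) (hk : k ≤ n) : -1 < (a - k).re ∧ -1 < (b - k).re := by
    have : (k : ℝ) ≤ n := by exact_mod_cast hk
    constructor <;> rw [hre] <;> linarith
  rw [integral_eval_mul_eq_integral_iterate_derivative_mul zero_le_one
      (fun k (x : ℝ) => rodriguesFun a b k x) n
      (fun k hk => continuousOn_rodriguesFun (hpos k hk).1 (hpos k hk).2)
      (fun k _ x hx => (hasDerivAt_rodriguesFun a b k (z := x) hx).comp_ofReal)
      (fun k hk => by simpa using rodriguesFun_apply_zero (ne_of_apply_ne re (hpos k hk).1.ne') b)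
      (fun k hk => by simpa using rodriguesFun_apply_one a (ne_of_apply_ne re (hpos k hk).2.ne'))
      (fun k hk => intervalIntegrable_rodriguesFun (hgt k hk).1 (hgt k hk).2),
    iterate_derivative_eq_C_of_natDegree_le (natDegree_rodriguesPoly_le a b n),
    coeff_rodriguesPoly_self]
  simp only [eval_C, rodriguesFun, rodriguesPoly, Nat.cast_zero, sub_zero, eval_one, mul_one,
    intervalIntegral.integral_const_mul, betaIntegral, add_sub_cancel_right]
  have hsign : ((-1 : ℂ)) ^ n * (-1) ^ n = 1 := by rw [← mul_pow]; norm_num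
  linear_combination (n.factorial * (descPochhammer ℂ n).eval (a + b)
    * ∫ x in (0 : ℝ)..1, (x : ℂ) ^ a * (1 - (x : ℂ)) ^ b) * hsign

theorem jacobiP_eq_eval_rodriguesPoly (α β : ℂ) (n : ℕ) {z : ℂ} (hz : z ∈ re ⁻¹' Ioo 0 1) :
    jacobiP α β n z = (rodriguesPoly (α + n) (β + n) n).eval z := by
  have hweight : EqOn (fun w : ℂ => w ^ n * (1 - w) ^ n * (w ^ α * (1 - w) ^ β))
      (fun w => w ^ (α + n) * (1 - w) ^ (β + n)) (re ⁻¹' Ioo 0 1) := fun w hw => by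
    obtain ⟨hw0, hw1⟩ := ne_zero_and_one_sub_ne_zero_of_mem_strip hw
    simp only [cpow_add _ _ hw0, cpow_add _ _ hw1, cpow_natCast]
    ring
  obtain ⟨hz0, hz1⟩ := ne_zero_and_one_sub_ne_zero_of_mem_strip hz
  have hne : z ^ α * (1 - z) ^ β ≠ 0 :=
    mul_ne_zero (fun h => hz0 ((cpow_eq_zero_iff _ _).1 h).1)
      (fun h => hz1 ((cpow_eq_zero_iff _ _).1 h).1)
  rw [jacobiP, hweight.iteratedDeriv_of_isOpen (isOpen_Ioo.preimage continuous_re) n hz,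
    iteratedDeriv_cpow_mul_one_sub_cpow _ _ n hz, rodriguesFun, add_sub_cancel_right,
    add_sub_cancel_right, inv_mul_cancel_left₀ hne]

theorem descPochhammer_eval_mul_betaIntegral {a b : ℂ} (ha : -1 < a.re) (hb : -1 < b.re) {n : ℕ}
    (hab : ∀ m : ℕ, a + b + 1 - n ≠ -m) :
    (descPochhammer ℂ n).eval (a + b) * betaIntegral (a + 1) (b + 1)
      = Gamma (a + 1) * Gamma (b + 1) / ((a + b + 1) * Gamma (a + b + 1 - n)) := by
  have hpoch : (descPochhammer ℂ n).eval (a + b) = Gamma (a + b + 1) / Gamma (a + b + 1 - n) := by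
    rw [descPochhammer_eval_eq_ascPochhammer, sub_add_eq_add_sub,
      ← Gamma_add_nat_div_Gamma_eq _ hab, sub_add_cancel]
  have hne : a + b + 1 ≠ 0 := fun h => hab n (by rw [h]; ring)
  have hbeta := Gamma_mul_Gamma_eq_betaIntegral (s := a + 1) (t := b + 1)
    (by rw [add_re, one_re]; linarith) (by rw [add_re, one_re]; linarith)
  rw [show a + 1 + (b + 1) = a + b + 1 + 1 by ring, Gamma_add_one _ hne] at hbeta
  have hGamma := Gamma_ne_zero hab
  rw [hpoch, hbeta]
  field_simp

/-- For `Re α > -1`, `Re β > -1` (and `α+β+1` not a nonpositive integer),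
`∫_0^1 pₙ(x)² x^α(1-x)^β dx = n! Γ(n+α+1) Γ(n+β+1) / ((2n+α+β+1) Γ(n+α+β+1))`. -/
theorem jacobi_norm (α β : ℂ) (hα : -1 < α.re) (hβ : -1 < β.re)
    (hαβ : ∀ m : ℕ, α + β + 1 ≠ -(m : ℂ)) (n : ℕ) :
    ∫ x in (0:ℝ)..1, (jacobiP α β n (x : ℂ)) ^ 2 * ((x : ℂ) ^ α * (1 - (x : ℂ)) ^ β)
      = (n.factorial : ℂ) * Complex.Gamma ((n : ℂ) + α + 1) * Complex.Gamma ((n : ℂ) + β + 1)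
        / ((2 * (n : ℂ) + α + β + 1) * Complex.Gamma ((n : ℂ) + α + β + 1)) := by
  have hweight : EqOn (fun x : ℝ => jacobiP α β n x ^ 2 * ((x : ℂ) ^ α * (1 - (x : ℂ)) ^ β))
      (fun x : ℝ => (rodriguesPoly (α + n) (β + n) n).eval (x : ℂ)
        * rodriguesFun (α + n) (β + n) n x) (Ioo 0 1) := fun x hx => by
    dsimp only
    rw [jacobiP_eq_eval_rodriguesPoly α β n (z := x) (by simpa using hx), rodriguesFun,
      add_sub_cancel_right, add_sub_cancel_right]
    ring
  have hshift (c : ℂ) (hc : -1 < c.re) : -1 < (c + n).re := by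
    rw [add_re, natCast_re]; linarith [n.cast_nonneg (α := ℝ)]
  rw [integral_congr_Ioo_of_le zero_le_one hweight,
    integral_eval_rodriguesPoly_mul_rodriguesFun
      (by rw [add_re, natCast_re]; linarith) (by rw [add_re, natCast_re]; linarith),
    mul_assoc, descPochhammer_eval_mul_betaIntegral (hshift α hα) (hshift β hβ)
      (fun m h => hαβ (m + n) (by push_cast; linear_combination h))]
  ring_nf
end

section
/- For Re α > -1, Re β > -1 and n ≥ 1, integrating by parts gives ∫_0^1 [x^n(1-x)^n w(x)]^{(n)} x^n dx = (-1)^n n! ∫_0^1 x^{n+α}(1-x)^{n+β} dx, where w(x) = x^α(1-x)^β and the superscript (n) denotes the n-th derivative; all boundary terms vanish. -/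
/-!
On `ℂ ∖ ((-∞, 0] ∪ [1, ∞))` the `k`-th derivative of `z ^ a * (1 - z) ^ b` is
`z ^ (a - k) * (1 - z) ^ (b - k)` times a polynomial. For `k < n` both exponents have positive
real part when `Re a, Re b > n - 1`, so this derivative extends continuously to `[0, 1]` and
vanishes at both endpoints; the `n`-th one is still integrable against the Beta kernel. Hence
`∫ D^(k+1) f · x^(k+1) = -(k+1) ∫ D^k f · x^k` with no boundary terms, and iterating gives
`(-1)^n n!`. The theorem is the case `a = n + α`, `b = n + β`.
-/

open Complex MeasureTheory Filter Topology Set Polynomial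
open scoped Interval

lemma Complex.cpow_eq_cpow_sub_one_mul {w : ℂ} (c : ℂ) (hw : w ≠ 0) :
    w ^ c = w ^ (c - 1) * w := by
  conv_lhs => rw [← sub_add_cancel c 1]
  rw [cpow_add _ _ hw, cpow_one]

namespace Jacobi

noncomputable def weight (a b z : ℂ) : ℂ := z ^ a * (1 - z) ^ b

/-- On `doubleSlitPlane`, the `k`-th derivative of `weight a b` is `weight (a - k) (b - k)` times
this polynomial: the recursion is the product rule, after factoring out
`weight (a - k - 1) (b - k - 1)`. -/
noncomputable def weightDerivPoly (a b : ℂ) : ℕ → ℂ[X]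
  | 0 => 1
  | k + 1 =>
    C (a - k) * (1 - X) * weightDerivPoly a b k - C (b - k) * X * weightDerivPoly a b k
      + X * (1 - X) * (weightDerivPoly a b k).derivative

noncomputable def weightDeriv (a b : ℂ) (k : ℕ) (z : ℂ) : ℂ :=
  weight (a - k) (b - k) z * (weightDerivPoly a b k).eval z

/-- `ℂ ∖ ((-∞, 0] ∪ [1, ∞))`, on which `weight a b` is holomorphic. -/
def doubleSlitPlane : Set ℂ := slitPlane ∩ (fun z => 1 - z) ⁻¹' slitPlane

lemma isOpen_doubleSlitPlane : IsOpen doubleSlitPlane :=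
  isOpen_slitPlane.inter (isOpen_slitPlane.preimage (by fun_prop))

lemma ofReal_mem_doubleSlitPlane {x : ℝ} (hx : x ∈ Ioo 0 1) :
    (x : ℂ) ∈ doubleSlitPlane := by
  refine ⟨ofReal_mem_slitPlane.2 hx.1, ?_⟩
  change 1 - (x : ℂ) ∈ slitPlane
  exact_mod_cast ofReal_mem_slitPlane.2 (sub_pos.2 hx.2)

lemma weight_eq_mul {a b z : ℂ} (hz : z ∈ doubleSlitPlane) :
    weight a b z = weight (a - 1) (b - 1) z * (z * (1 - z)) := by
  rw [weight, weight, cpow_eq_cpow_sub_one_mul a (slitPlane_ne_zero hz.1),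
    cpow_eq_cpow_sub_one_mul b (slitPlane_ne_zero hz.2)]
  ring

lemma hasDerivAt_weight {a b z : ℂ} (hz : z ∈ doubleSlitPlane) :
    HasDerivAt (weight a b) (weight (a - 1) (b - 1) z * (a * (1 - z) - b * z)) z := by
  have hpow : HasDerivAt (fun w : ℂ => w ^ a) (a * z ^ (a - 1) * 1) z :=
    (hasDerivAt_id z).cpow_const hz.1
  have hpow' : HasDerivAt (fun w : ℂ => (1 - w) ^ b) (b * (1 - z) ^ (b - 1) * (0 - 1)) z :=
    ((hasDerivAt_const z 1).sub (hasDerivAt_id z)).cpow_const hz.2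
  refine (hpow.fun_mul hpow').congr_deriv ?_
  rw [weight, cpow_eq_cpow_sub_one_mul a (slitPlane_ne_zero hz.1),
    cpow_eq_cpow_sub_one_mul b (slitPlane_ne_zero hz.2)]
  ring

lemma hasDerivAt_weightDeriv (a b : ℂ) (k : ℕ) {z : ℂ} (hz : z ∈ doubleSlitPlane) :
    HasDerivAt (weightDeriv a b k) (weightDeriv a b (k + 1) z) z := by
  refine ((hasDerivAt_weight hz).mul ((weightDerivPoly a b k).hasDerivAt z)).congr_deriv ?_
  have hcast : a - ((k + 1 : ℕ) : ℂ) = a - k - 1 ∧ b - ((k + 1 : ℕ) : ℂ) = b - k - 1 := by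
    constructor <;> push_cast <;> ring
  rw [weightDeriv, weightDerivPoly, hcast.1, hcast.2, weight_eq_mul (a := a - k) hz]
  simp only [eval_add, eval_sub, eval_mul, eval_C, eval_X, eval_one]
  ring

lemma weightDeriv_zero (a b : ℂ) : weightDeriv a b 0 = weight a b := by
  ext z
  simp [weightDeriv, weightDerivPoly]

lemma iteratedDeriv_weight (a b : ℂ) (k : ℕ) {z : ℂ} (hz : z ∈ doubleSlitPlane) :
    iteratedDeriv k (weight a b) z = weightDeriv a b k z := by
  induction k generalizing z with
  | zero => simp [weightDeriv_zero]
  | succ k ih =>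
    have hk : iteratedDeriv k (weight a b) =ᶠ[𝓝 z] weightDeriv a b k :=
      eventually_of_mem (isOpen_doubleSlitPlane.mem_nhds hz) fun w hw => ih hw
    rw [iteratedDeriv_succ, hk.deriv_eq, (hasDerivAt_weightDeriv a b k hz).deriv]

lemma continuous_weight_ofReal {a b : ℂ} (ha : 0 < a.re) (hb : 0 < b.re) :
    Continuous fun x : ℝ => weight a b x := by
  have h1 := (continuous_ofReal_cpow_const hb).comp (continuous_sub_left (1 : ℝ))
  refine ((continuous_ofReal_cpow_const ha).mul h1).congr fun x => ?_
  simp [weight]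

lemma weight_apply_zero {a : ℂ} (ha : a ≠ 0) (b : ℂ) : weight a b 0 = 0 := by
  simp [weight, zero_cpow ha]

lemma weight_apply_one (a : ℂ) {b : ℂ} (hb : b ≠ 0) : weight a b 1 = 0 := by
  simp [weight, zero_cpow hb]

lemma intervalIntegrable_weight_mul {a b : ℂ} (ha : -1 < a.re) (hb : -1 < b.re)
    {g : ℝ → ℂ} (hg : ContinuousOn g [[0, 1]]) :
    IntervalIntegrable (fun x : ℝ => weight a b x * g x) volume 0 1 := by
  have hbeta := betaIntegral_convergent (u := a + 1) (v := b + 1)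
    (by simp only [add_re, one_re]; linarith) (by simp only [add_re, one_re]; linarith)
  simp only [add_sub_cancel_right] at hbeta
  exact hbeta.mul_continuousOn hg

lemma integral_weightDeriv_succ_mul_pow {a b : ℂ} {k : ℕ} (ha : (k : ℝ) < a.re)
    (hb : (k : ℝ) < b.re) :
    ∫ x in (0 : ℝ)..1, weightDeriv a b (k + 1) x * (x : ℂ) ^ (k + 1)
      = -((k : ℂ) + 1) * ∫ x in (0 : ℝ)..1, weightDeriv a b k x * (x : ℂ) ^ k := by
  have ha' : 0 < (a - k).re := by simpa using ha
  have hb' : 0 < (b - k).re := by simpa using hb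
  have hpoly (j : ℕ) : Continuous fun x : ℝ => (weightDerivPoly a b j).eval (x : ℂ) :=
    (weightDerivPoly a b j).continuous.comp continuous_ofReal
  have hibp := intervalIntegral.integral_mul_deriv_eq_deriv_mul_of_hasDerivAt
    (u := fun x : ℝ => weightDeriv a b k x) (v := fun x : ℝ => (x : ℂ) ^ (k + 1))
    (u' := fun x : ℝ => weightDeriv a b (k + 1) x)
    (v' := fun x : ℝ => ((k : ℂ) + 1) * (x : ℂ) ^ k)
    ((continuous_weight_ofReal ha' hb').mul (hpoly k)).continuousOn (by fun_prop)
    (fun x hx => (hasDerivAt_weightDeriv a b k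
      (ofReal_mem_doubleSlitPlane (by simpa using hx))).comp_ofReal)
    (fun x _ => by simpa using (hasDerivAt_pow (k + 1) (x : ℂ)).comp_ofReal)
    (intervalIntegrable_weight_mul
      (by simp only [sub_re, Nat.cast_succ, add_re, natCast_re, one_re]; linarith)
      (by simp only [sub_re, Nat.cast_succ, add_re, natCast_re, one_re]; linarith)
      (hpoly (k + 1)).continuousOn)
    ((by fun_prop : Continuous _).intervalIntegrable 0 1)
  have h0 : weightDeriv a b k ((0 : ℝ) : ℂ) = 0 := by
    rw [weightDeriv, ofReal_zero, weight_apply_zero (by rintro h; simp [h] at ha'), zero_mul]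
  have h1 : weightDeriv a b k ((1 : ℝ) : ℂ) = 0 := by
    rw [weightDeriv, ofReal_one, weight_apply_one _ (by rintro h; simp [h] at hb'), zero_mul]
  simp_rw [h0, h1, zero_mul, sub_self, zero_sub, mul_left_comm _ ((k : ℂ) + 1),
    intervalIntegral.integral_const_mul] at hibp
  linear_combination hibp

lemma integral_weightDeriv_mul_pow {a b : ℂ} (k : ℕ) (ha : (k : ℝ) - 1 < a.re)
    (hb : (k : ℝ) - 1 < b.re) :
    ∫ x in (0 : ℝ)..1, weightDeriv a b k x * (x : ℂ) ^ k
      = (-1) ^ k * k.factorial * ∫ x in (0 : ℝ)..1, weight a b x := by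
  induction k with
  | zero => simp [weightDeriv_zero]
  | succ k ih =>
    push_cast at ha hb
    rw [integral_weightDeriv_succ_mul_pow (by linarith) (by linarith),
      ih (by linarith) (by linarith), Nat.factorial_succ]
    push_cast
    ring

theorem integral_iteratedDeriv_weight_mul_pow {a b : ℂ} (k : ℕ) (ha : (k : ℝ) - 1 < a.re)
    (hb : (k : ℝ) - 1 < b.re) :
    ∫ x in (0 : ℝ)..1, iteratedDeriv k (weight a b) x * (x : ℂ) ^ k
      = (-1) ^ k * k.factorial * ∫ x in (0 : ℝ)..1, weight a b x := by
  rw [← integral_weightDeriv_mul_pow k ha hb]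
  refine intervalIntegral.integral_congr_Ioo_of_le zero_le_one fun x hx => ?_
  rw [iteratedDeriv_weight a b k (ofReal_mem_doubleSlitPlane hx)]

lemma pow_mul_one_sub_pow_mul_weight (n : ℕ) (a b : ℂ) {z : ℂ} (hz : z ∈ doubleSlitPlane) :
    z ^ n * (1 - z) ^ n * weight a b z = weight (n + a) (n + b) z := by
  rw [weight, weight, cpow_add _ _ (slitPlane_ne_zero hz.1),
    cpow_add _ _ (slitPlane_ne_zero hz.2), cpow_natCast, cpow_natCast]
  ring

end Jacobi

theorem rodrigues_integration_by_parts_general (α β : ℂ) (hα : -1 < α.re) (hβ : -1 < β.re)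
    (n : ℕ) :
    ∫ x in (0:ℝ)..1,
        iteratedDeriv n (fun z : ℂ => z ^ n * (1 - z) ^ n * (z ^ α * (1 - z) ^ β)) (x : ℂ)
          * (x : ℂ) ^ n
      = (-1 : ℂ) ^ n * (n.factorial : ℂ) *
        ∫ x in (0:ℝ)..1, (x : ℂ) ^ ((n : ℂ) + α) * (1 - (x : ℂ)) ^ ((n : ℂ) + β) := by
  have hderiv : ∀ x ∈ Ioo (0 : ℝ) 1,
      iteratedDeriv n (fun z : ℂ => z ^ n * (1 - z) ^ n * (z ^ α * (1 - z) ^ β)) (x : ℂ)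
        = iteratedDeriv n (Jacobi.weight (n + α) (n + β)) x := fun x hx =>
    Filter.EventuallyEq.iteratedDeriv_eq n <|
      eventually_of_mem (Jacobi.isOpen_doubleSlitPlane.mem_nhds
        (Jacobi.ofReal_mem_doubleSlitPlane hx)) fun z hz =>
          Jacobi.pow_mul_one_sub_pow_mul_weight n α β hz
  rw [intervalIntegral.integral_congr_Ioo_of_le zero_le_one
    (fun x hx => by rw [hderiv x hx])]
  exact Jacobi.integral_iteratedDeriv_weight_mul_pow n
    (by simp only [add_re, natCast_re]; linarith) (by simp only [add_re, natCast_re]; linarith)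

/-- For `Re α > -1`, `Re β > -1` and `n ≥ 1`, integrating by parts `n` times
(with all boundary terms vanishing) gives
`∫_0^1 [xⁿ(1-x)ⁿ w(x)]⁽ⁿ⁾ xⁿ dx = (-1)ⁿ n! ∫_0^1 x^(n+α)(1-x)^(n+β) dx`,
where `w(x) = x^α(1-x)^β`. -/
theorem rodrigues_integration_by_parts (α β : ℂ) (hα : -1 < α.re) (hβ : -1 < β.re)
    (n : ℕ) (hn : 1 ≤ n) :
    ∫ x in (0:ℝ)..1,
        iteratedDeriv n (fun z : ℂ => z ^ n * (1 - z) ^ n * (z ^ α * (1 - z) ^ β)) (x : ℂ)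
          * (x : ℂ) ^ n
      = (-1 : ℂ) ^ n * (n.factorial : ℂ) *
        ∫ x in (0:ℝ)..1, (x : ℂ) ^ ((n : ℂ) + α) * (1 - (x : ℂ)) ^ ((n : ℂ) + β) :=
  rodrigues_integration_by_parts_general α β hα hβ n
end
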